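/- (Curl structure equation for the localized flow map) Let η, v be smooth with ∂_t η = v, η(x,0)=x, satisfying the Cauchy invariance ε_{ijk} ∂_j v_m ∂_k η_m = (ω₀)_i for all t, and let χ = χ(x₃) be a smooth cutoff. Then ε_{ijk} ∂_k η_m ∂_j ∇η_m = 2∫_0^t ε_{ijk} ∂_k v_m ∂_j ∇η_m ds + t ∇(ω₀)_i, for each i = 1,2,3. -/

import Mathlib

open scoped ContDiff

/-- Partial derivative in direction `j` of a scalar field on `ℝ³`. -/
noncomputable def pd (j : Fin 3) (f : (Fin 3 → ℝ) → ℝ) (x : Fin 3 → ℝ) : ℝ :=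
  fderiv ℝ f x (Pi.single j 1)

/-- The Levi-Civita permutation symbol on `{0,1,2}` (indices in `Fin 3`), `ε₀₁₂ = 1`. -/
noncomputable def levi (i j k : Fin 3) : ℝ :=
  (((j : ℕ) : ℝ) - ((i : ℕ) : ℝ)) * (((k : ℕ) : ℝ) - ((i : ℕ) : ℝ)) *
    (((k : ℕ) : ℝ) - ((j : ℕ) : ℝ)) / 2

noncomputable def Dv (w : ℝ × (Fin 3 → ℝ)) (f : ℝ × (Fin 3 → ℝ) → ℝ) (p : ℝ × (Fin 3 → ℝ)) : ℝ :=
  fderiv ℝ f p w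

lemma contDiff_Dv {f : ℝ × (Fin 3 → ℝ) → ℝ} (hf : ContDiff ℝ ∞ f) (w : ℝ × (Fin 3 → ℝ)) :
    ContDiff ℝ ∞ (Dv w f) :=
  (ContinuousLinearMap.apply ℝ ℝ w).contDiff.comp (hf.fderiv_right (by simp))

lemma diff_of_inf {f : ℝ × (Fin 3 → ℝ) → ℝ} (hf : ContDiff ℝ ∞ f) : Differentiable ℝ f :=
  hf.differentiable (by simp)

lemma hasFDerivAt_slice {f : ℝ × (Fin 3 → ℝ) → ℝ} (hf : ContDiff ℝ ∞ f) (t : ℝ) (x : Fin 3 → ℝ) :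
    HasFDerivAt (fun y => f (t, y))
      ((fderiv ℝ f (t, x)).comp
        ((0 : (Fin 3 → ℝ) →L[ℝ] ℝ).prod (ContinuousLinearMap.id ℝ (Fin 3 → ℝ)))) x :=
  ((diff_of_inf hf) (t, x)).hasFDerivAt.comp x ((hasFDerivAt_const t x).prodMk (hasFDerivAt_id x))

lemma pd_slice {f : ℝ × (Fin 3 → ℝ) → ℝ} (hf : ContDiff ℝ ∞ f) (t : ℝ) (x : Fin 3 → ℝ)
    (j : Fin 3) : pd j (fun y => f (t, y)) x = Dv (0, Pi.single j 1) f (t, x) := by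
  unfold pd Dv
  rw [(hasFDerivAt_slice hf t x).fderiv]
  rfl

lemma hasDerivAt_slice {f : ℝ × (Fin 3 → ℝ) → ℝ} (hf : ContDiff ℝ ∞ f) (t : ℝ) (x : Fin 3 → ℝ) :
    HasDerivAt (fun s => f (s, x)) (Dv (1, 0) f (t, x)) t :=
  ((diff_of_inf hf) (t, x)).hasFDerivAt.comp_hasDerivAt t
    ((hasDerivAt_id t).prodMk (hasDerivAt_const t x))

lemma Dv_comm {f : ℝ × (Fin 3 → ℝ) → ℝ} (hf : ContDiff ℝ ∞ f) (w₁ w₂ p : ℝ × (Fin 3 → ℝ)) :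
    Dv w₁ (Dv w₂ f) p = Dv w₂ (Dv w₁ f) p := by
  have hd : DifferentiableAt ℝ (fderiv ℝ f) p :=
    ((hf.fderiv_right (m := ∞) (by simp)).differentiable
      (by simp)).differentiableAt
  have h1 : ∀ w : ℝ × (Fin 3 → ℝ), HasFDerivAt (Dv w f)
      ((ContinuousLinearMap.apply ℝ ℝ w).comp (fderiv ℝ (fderiv ℝ f) p)) p :=
    fun w => (ContinuousLinearMap.apply ℝ ℝ w).hasFDerivAt.comp p hd.hasFDerivAt
  have hsymm : IsSymmSndFDerivAt ℝ f p :=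
    hf.contDiffAt.isSymmSndFDerivAt (by rw [minSmoothness_of_isRCLikeNormedField]; exact WithTop.coe_le_coe.mpr le_top)
  calc Dv w₁ (Dv w₂ f) p = fderiv ℝ (fderiv ℝ f) p w₁ w₂ := by
        rw [Dv, (h1 w₂).fderiv]; rfl
    _ = fderiv ℝ (fderiv ℝ f) p w₂ w₁ := hsymm w₁ w₂
    _ = Dv w₂ (Dv w₁ f) p := by rw [Dv, (h1 w₁).fderiv]; rfl

lemma Dv_sum_mul (c : Fin 3 → Fin 3 → Fin 3 → ℝ)
    (a b : Fin 3 → Fin 3 → Fin 3 → (ℝ × (Fin 3 → ℝ)) → ℝ)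
    (ha : ∀ j k m, ContDiff ℝ ∞ (a j k m)) (hb : ∀ j k m, ContDiff ℝ ∞ (b j k m))
    (w p : ℝ × (Fin 3 → ℝ)) :
    Dv w (fun q => ∑ j, ∑ k, ∑ m, c j k m * a j k m q * b j k m q) p =
      ∑ j, ∑ k, ∑ m,
        c j k m * (Dv w (a j k m) p * b j k m p + a j k m p * Dv w (b j k m) p) := by
  have H : HasFDerivAt (fun q => ∑ j, ∑ k, ∑ m, c j k m * a j k m q * b j k m q)
      (∑ j : Fin 3, ∑ k : Fin 3, ∑ m : Fin 3,
        ((c j k m * a j k m p) • fderiv ℝ (b j k m) p +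
          b j k m p • (c j k m • fderiv ℝ (a j k m) p))) p := by
    apply HasFDerivAt.fun_sum; intro j _
    apply HasFDerivAt.fun_sum; intro k _
    apply HasFDerivAt.fun_sum; intro m _
    exact ((diff_of_inf (ha j k m) p).hasFDerivAt.const_mul (c j k m)).mul
      (diff_of_inf (hb j k m) p).hasFDerivAt
  unfold Dv
  rw [H.fderiv]
  simp only [ContinuousLinearMap.coe_sum', Finset.sum_apply, ContinuousLinearMap.add_apply,
    ContinuousLinearMap.smul_apply, smul_eq_mul]
  exact Finset.sum_congr rfl fun j _ => Finset.sum_congr rfl fun k _ =>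
    Finset.sum_congr rfl fun m _ => by ring

lemma sum_antisym (i : Fin 3) (A B : Fin 3 → Fin 3 → ℝ) :
    (∑ j, ∑ k, ∑ m, levi i j k * A j m * B k m) =
      - ∑ j, ∑ k, ∑ m, levi i j k * A k m * B j m := by
  simp only [Fin.sum_univ_three, levi]
  ring

lemma sum3_add (f g : Fin 3 → Fin 3 → Fin 3 → ℝ) :
    (∑ j, ∑ k, ∑ m, (f j k m + g j k m)) =
      (∑ j, ∑ k, ∑ m, f j k m) + ∑ j, ∑ k, ∑ m, g j k m := by
  simp [Finset.sum_add_distrib]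

noncomputable def UU (η : ℝ → (Fin 3 → ℝ) → Fin 3 → ℝ) (k m : Fin 3) :
    (ℝ × (Fin 3 → ℝ)) → ℝ :=
  Dv (0, Pi.single k 1) (fun p => η p.1 p.2 m)

noncomputable def VV (η : ℝ → (Fin 3 → ℝ) → Fin 3 → ℝ) (v : ℝ → (Fin 3 → ℝ) → Fin 3 → ℝ)
    (k m : Fin 3) : (ℝ × (Fin 3 → ℝ)) → ℝ :=
  Dv (0, Pi.single k 1) (Dv (1, 0) (fun p => η p.1 p.2 m))

noncomputable def WW (η : ℝ → (Fin 3 → ℝ) → Fin 3 → ℝ) (r j m : Fin 3) :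
    (ℝ × (Fin 3 → ℝ)) → ℝ :=
  Dv (0, Pi.single j 1) (Dv (0, Pi.single r 1) (fun p => η p.1 p.2 m))

noncomputable def XX (η : ℝ → (Fin 3 → ℝ) → Fin 3 → ℝ) (r j m : Fin 3) :
    (ℝ × (Fin 3 → ℝ)) → ℝ :=
  Dv (0, Pi.single j 1) (Dv (0, Pi.single r 1) (Dv (1, 0) (fun p => η p.1 p.2 m)))

/-- **Curl structure equation for the flow map.** If `∂_t η = v`, `η(x,0) = x`, and the
Cauchy invariance `ε_{ijk} ∂_j v_m ∂_k η_m = (ω₀)_i` holds for all `t`, then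
`ε_{ijk} ∂_k η_m ∂_j ∇η_m = 2∫_0^t ε_{ijk} ∂_k v_m ∂_j ∇η_m ds + t ∇(ω₀)_i`
(componentwise in the gradient direction `r`). -/
theorem stmt14 (η v : ℝ → (Fin 3 → ℝ) → Fin 3 → ℝ) (ω₀ : (Fin 3 → ℝ) → Fin 3 → ℝ)
    (hsmη : ContDiff ℝ (⊤ : ℕ∞) fun p : ℝ × (Fin 3 → ℝ) => (η p.1 p.2 : Fin 3 → ℝ))
    (hηt : ∀ t x (i : Fin 3), deriv (fun s => η s x i) t = v t x i)
    (hη0 : ∀ x, η 0 x = x)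
    (hω₀ : ∀ x (i : Fin 3), ω₀ x i =
      ∑ j : Fin 3, ∑ k : Fin 3, levi i j k * pd j (fun y => v 0 y k) x)
    (hcauchy : ∀ t x (i : Fin 3),
      ∑ j : Fin 3, ∑ k : Fin 3, ∑ m : Fin 3,
        levi i j k * pd j (fun y => v t y m) x * pd k (fun y => η t y m) x = ω₀ x i) :
    ∀ (t : ℝ) (x : Fin 3 → ℝ) (i r : Fin 3),
      ∑ j : Fin 3, ∑ k : Fin 3, ∑ m : Fin 3,
          levi i j k * pd k (fun y => η t y m) x * pd j (pd r (fun y => η t y m)) x =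
        2 * (∫ s in (0:ℝ)..t, ∑ j : Fin 3, ∑ k : Fin 3, ∑ m : Fin 3,
              levi i j k * pd k (fun y => v s y m) x * pd j (pd r (fun y => η s y m)) x)
          + t * pd r (fun y => ω₀ y i) x := by
  have hsm : ContDiff ℝ ∞ fun p : ℝ × (Fin 3 → ℝ) => η p.1 p.2 := hsmη.of_le (by simp)
  have hg : ∀ m : Fin 3, ContDiff ℝ ∞ fun p : ℝ × (Fin 3 → ℝ) => η p.1 p.2 m := fun m =>
    (ContinuousLinearMap.proj (R := ℝ) (φ := fun _ : Fin 3 => ℝ) m).contDiff.comp hsm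
  have hv : ∀ (s : ℝ) (y : Fin 3 → ℝ) (m : Fin 3),
      v s y m = Dv (1, 0) (fun p => η p.1 p.2 m) (s, y) := fun s y m => by
    rw [← hηt s y m]; exact (hasDerivAt_slice (hg m) s y).deriv
  intro t x i r
  have hUs : ∀ k m, ContDiff ℝ ∞ (UU η k m) := fun k m => contDiff_Dv (hg m) _
  have hVs : ∀ k m, ContDiff ℝ ∞ (VV η v k m) := fun k m =>
    contDiff_Dv (contDiff_Dv (hg m) _) _
  have hWs : ∀ j m, ContDiff ℝ ∞ (WW η r j m) := fun j m =>
    contDiff_Dv (contDiff_Dv (hg m) _) _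
  have hA : ∀ (s : ℝ) (y : Fin 3 → ℝ) (k m : Fin 3),
      pd k (fun z => η s z m) y = UU η k m (s, y) := fun s y k m => pd_slice (hg m) s y k
  have hB : ∀ (s : ℝ) (y : Fin 3 → ℝ) (j m : Fin 3),
      pd j (pd r fun z => η s z m) y = WW η r j m (s, y) := by
    intro s y j m
    have h1 : (pd r fun z => η s z m) =
        fun z => Dv (0, Pi.single r 1) (fun p => η p.1 p.2 m) (s, z) :=
      funext fun z => pd_slice (hg m) s z r
    rw [h1]
    exact pd_slice (contDiff_Dv (hg m) _) s y j
  have hC : ∀ (s : ℝ) (y : Fin 3 → ℝ) (k m : Fin 3),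
      pd k (fun z => v s z m) y = VV η v k m (s, y) := by
    intro s y k m
    have h1 : (fun z => v s z m) =
        fun z => Dv (1, 0) (fun p => η p.1 p.2 m) (s, z) := funext fun z => hv s z m
    rw [h1]
    exact pd_slice (contDiff_Dv (hg m) _) s y k
  -- the Cauchy invariance in `Dv` form
  have hca : ∀ (s : ℝ) (y : Fin 3 → ℝ),
      (∑ j : Fin 3, ∑ k : Fin 3, ∑ m : Fin 3,
        levi i j k * VV η v j m (s, y) * UU η k m (s, y)) = ω₀ y i := by
    intro s y
    rw [← hcauchy s y i]
    exact Finset.sum_congr rfl fun j _ => Finset.sum_congr rfl fun k _ =>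
      Finset.sum_congr rfl fun m _ => by rw [hC, hA]
  -- the gradient of ω₀ via the differentiated Cauchy invariance
  have hcval : ∀ s : ℝ, pd r (fun y => ω₀ y i) x =
      (∑ j : Fin 3, ∑ k : Fin 3, ∑ m : Fin 3,
        levi i j k * UU η k m (s, x) * XX η r j m (s, x))
      + ∑ j : Fin 3, ∑ k : Fin 3, ∑ m : Fin 3,
        levi i j k * VV η v j m (s, x) * WW η r k m (s, x) := by
    intro s
    have hfun : (fun y => ω₀ y i) = fun y =>
        (fun q => ∑ j : Fin 3, ∑ k : Fin 3, ∑ m : Fin 3,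
          levi i j k * VV η v j m q * UU η k m q) (s, y) :=
      funext fun y => (hca s y).symm
    have hΦ : ContDiff ℝ ∞ (fun q => ∑ j : Fin 3, ∑ k : Fin 3, ∑ m : Fin 3,
        levi i j k * VV η v j m q * UU η k m q) := by
      apply ContDiff.sum; intro j _
      apply ContDiff.sum; intro k _
      apply ContDiff.sum; intro m _
      exact (contDiff_const.mul (hVs j m)).mul (hUs k m)
    have hd := Dv_sum_mul (fun j k m => levi i j k) (fun j k m => VV η v j m)
      (fun j k m => UU η k m) (fun j k m => hVs j m) (fun j k m => hUs k m)
      (0, Pi.single r 1) (s, x)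
    rw [hfun, pd_slice hΦ s x r, hd, ← sum3_add]
    refine Finset.sum_congr rfl fun j _ => Finset.sum_congr rfl fun k _ =>
      Finset.sum_congr rfl fun m _ => ?_
    have e1 : Dv (0, Pi.single r 1) (VV η v j m) (s, x) = XX η r j m (s, x) := by
      unfold VV XX
      exact Dv_comm (contDiff_Dv (hg m) _) _ _ _
    have e2 : Dv (0, Pi.single r 1) (UU η k m) (s, x) = WW η r k m (s, x) := by
      unfold UU WW
      exact Dv_comm (hg m) _ _ _
    rw [e1, e2]; ring
  -- smoothness of Ψ
  have hΨs : ContDiff ℝ ∞ (fun q => ∑ j : Fin 3, ∑ k : Fin 3, ∑ m : Fin 3,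
      levi i j k * UU η k m q * WW η r j m q) := by
    apply ContDiff.sum; intro j _
    apply ContDiff.sum; intro k _
    apply ContDiff.sum; intro m _
    exact (contDiff_const.mul (hUs k m)).mul (hWs j m)
  -- the time derivative of the localized curl expression
  have hder : ∀ s : ℝ,
      HasDerivAt (fun u => ∑ j : Fin 3, ∑ k : Fin 3, ∑ m : Fin 3,
          levi i j k * UU η k m (u, x) * WW η r j m (u, x))
        (2 * (∑ j : Fin 3, ∑ k : Fin 3, ∑ m : Fin 3,
            levi i j k * VV η v k m (s, x) * WW η r j m (s, x))
          + pd r (fun y => ω₀ y i) x) s := by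
    intro s
    have h0 := hasDerivAt_slice hΨs s x
    have e3 : ∀ (k m : Fin 3), Dv (1, 0) (UU η k m) (s, x) = VV η v k m (s, x) := by
      intro k m; unfold UU VV; exact Dv_comm (hg m) _ _ _
    have e4 : ∀ (j m : Fin 3), Dv (1, 0) (WW η r j m) (s, x) = XX η r j m (s, x) := by
      intro j m
      unfold WW XX
      have hin : Dv (1, 0) (Dv (0, Pi.single r 1) (fun p => η p.1 p.2 m))
          = Dv (0, Pi.single r 1) (Dv (1, 0) (fun p => η p.1 p.2 m)) :=
        funext fun q => Dv_comm (hg m) _ _ q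
      calc Dv (1, 0) (Dv (0, Pi.single j 1)
              (Dv (0, Pi.single r 1) (fun p => η p.1 p.2 m))) (s, x)
          = Dv (0, Pi.single j 1) (Dv (1, 0)
              (Dv (0, Pi.single r 1) (fun p => η p.1 p.2 m))) (s, x) :=
            Dv_comm (contDiff_Dv (hg m) _) _ _ _
        _ = Dv (0, Pi.single j 1) (Dv (0, Pi.single r 1)
              (Dv (1, 0) (fun p => η p.1 p.2 m))) (s, x) := by rw [hin]
    have hd := Dv_sum_mul (fun j k m => levi i j k) (fun j k m => UU η k m)
      (fun j k m => WW η r j m) (fun j k m => hUs k m) (fun j k m => hWs j m)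
      (1, 0) (s, x)
    have hval : Dv (1, 0) (fun q => ∑ j : Fin 3, ∑ k : Fin 3, ∑ m : Fin 3,
        levi i j k * UU η k m q * WW η r j m q) (s, x)
        = 2 * (∑ j : Fin 3, ∑ k : Fin 3, ∑ m : Fin 3,
            levi i j k * VV η v k m (s, x) * WW η r j m (s, x))
          + pd r (fun y => ω₀ y i) x := by
      rw [hd]
      simp only [e3, e4]
      rw [hcval s,
        sum_antisym i (fun a b => VV η v a b (s, x)) (fun a b => WW η r a b (s, x))]
      have hL : (∑ j : Fin 3, ∑ k : Fin 3, ∑ m : Fin 3,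
          levi i j k * (VV η v k m (s, x) * WW η r j m (s, x)
            + UU η k m (s, x) * XX η r j m (s, x)))
          = (∑ j : Fin 3, ∑ k : Fin 3, ∑ m : Fin 3,
              levi i j k * VV η v k m (s, x) * WW η r j m (s, x))
            + ∑ j : Fin 3, ∑ k : Fin 3, ∑ m : Fin 3,
              levi i j k * UU η k m (s, x) * XX η r j m (s, x) := by
        rw [← sum3_add]
        exact Finset.sum_congr rfl fun j _ => Finset.sum_congr rfl fun k _ =>
          Finset.sum_congr rfl fun m _ => by ring
      rw [hL]
      ring
    rw [hval] at h0
    exact h0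
  -- value at time 0
  have hW0 : ∀ (j m : Fin 3), WW η r j m ((0 : ℝ), x) = 0 := by
    intro j m
    have hconst : (fun y => Dv (0, Pi.single r 1) (fun p => η p.1 p.2 m) ((0 : ℝ), y))
        = fun _ : Fin 3 → ℝ => (Pi.single r 1 : Fin 3 → ℝ) m := by
      funext y
      rw [← pd_slice (hg m) 0 y r]
      show pd r (fun z => η 0 z m) y = (Pi.single r 1 : Fin 3 → ℝ) m
      rw [show (fun z : Fin 3 → ℝ => η 0 z m) = (fun z : Fin 3 → ℝ => z m) from
        funext fun z => by rw [hη0 z]]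
      unfold pd
      rw [show (fun z : Fin 3 → ℝ => z m)
          = ⇑(ContinuousLinearMap.proj (R := ℝ) (φ := fun _ : Fin 3 => ℝ) m) from rfl,
        ContinuousLinearMap.fderiv]
      rfl
    have : WW η r j m ((0 : ℝ), x)
        = pd j (fun y => Dv (0, Pi.single r 1) (fun p => η p.1 p.2 m) ((0 : ℝ), y)) x :=
      (pd_slice (contDiff_Dv (hg m) _) 0 x j).symm
    rw [this, hconst]
    simp [pd]
  have hF0 : (∑ j : Fin 3, ∑ k : Fin 3, ∑ m : Fin 3,
      levi i j k * UU η k m ((0 : ℝ), x) * WW η r j m ((0 : ℝ), x)) = 0 :=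
    Finset.sum_eq_zero fun j _ => Finset.sum_eq_zero fun k _ =>
      Finset.sum_eq_zero fun m _ => by rw [hW0 j m, mul_zero]
  -- continuity / integrability
  have hGcont : Continuous (fun s : ℝ => ∑ j : Fin 3, ∑ k : Fin 3, ∑ m : Fin 3,
      levi i j k * VV η v k m (s, x) * WW η r j m (s, x)) := by
    apply continuous_finset_sum; intro j _
    apply continuous_finset_sum; intro k _
    apply continuous_finset_sum; intro m _
    exact (continuous_const.mul
        ((hVs k m).continuous.comp (continuous_id.prodMk continuous_const))).mul
      ((hWs j m).continuous.comp (continuous_id.prodMk continuous_const))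
  have hcont2 : Continuous (fun s : ℝ =>
      2 * (∑ j : Fin 3, ∑ k : Fin 3, ∑ m : Fin 3,
        levi i j k * VV η v k m (s, x) * WW η r j m (s, x))
      + pd r (fun y => ω₀ y i) x) :=
    (continuous_const.mul hGcont).add continuous_const
  -- fundamental theorem of calculus
  have hFTC := intervalIntegral.integral_eq_sub_of_hasDerivAt
    (f := fun u => ∑ j : Fin 3, ∑ k : Fin 3, ∑ m : Fin 3,
      levi i j k * UU η k m (u, x) * WW η r j m (u, x))
    (f' := fun s => 2 * (∑ j : Fin 3, ∑ k : Fin 3, ∑ m : Fin 3,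
        levi i j k * VV η v k m (s, x) * WW η r j m (s, x))
      + pd r (fun y => ω₀ y i) x)
    (a := 0) (b := t) (fun s _ => hder s) (hcont2.intervalIntegrable 0 t)
  have hsplit : (∫ s in (0:ℝ)..t,
      (2 * (∑ j : Fin 3, ∑ k : Fin 3, ∑ m : Fin 3,
        levi i j k * VV η v k m (s, x) * WW η r j m (s, x))
      + pd r (fun y => ω₀ y i) x))
      = 2 * (∫ s in (0:ℝ)..t, ∑ j : Fin 3, ∑ k : Fin 3, ∑ m : Fin 3,
          levi i j k * VV η v k m (s, x) * WW η r j m (s, x))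
        + t * pd r (fun y => ω₀ y i) x := by
    rw [intervalIntegral.integral_add
      ((hGcont.intervalIntegrable 0 t).const_mul 2) intervalIntegrable_const,
      intervalIntegral.integral_const_mul, intervalIntegral.integral_const]
    simp [smul_eq_mul]
  -- rewrite the goal
  have hLHS : (∑ j : Fin 3, ∑ k : Fin 3, ∑ m : Fin 3,
      levi i j k * pd k (fun y => η t y m) x * pd j (pd r fun y => η t y m) x)
      = ∑ j : Fin 3, ∑ k : Fin 3, ∑ m : Fin 3,
          levi i j k * UU η k m (t, x) * WW η r j m (t, x) :=
    Finset.sum_congr rfl fun j _ => Finset.sum_congr rfl fun k _ =>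
      Finset.sum_congr rfl fun m _ => by rw [hA, hB]
  have hInt : (∫ s in (0:ℝ)..t, ∑ j : Fin 3, ∑ k : Fin 3, ∑ m : Fin 3,
      levi i j k * pd k (fun y => v s y m) x * pd j (pd r fun y => η s y m) x)
      = ∫ s in (0:ℝ)..t, ∑ j : Fin 3, ∑ k : Fin 3, ∑ m : Fin 3,
          levi i j k * VV η v k m (s, x) * WW η r j m (s, x) := by
    apply intervalIntegral.integral_congr
    intro s _
    exact Finset.sum_congr rfl fun j _ => Finset.sum_congr rfl fun k _ =>
      Finset.sum_congr rfl fun m _ => by rw [hC, hB]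
  rw [hLHS, hInt]
  rw [hsplit] at hFTC
  simp only [hF0, sub_zero] at hFTC
  exact hFTC.symm
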